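/- Suppose f : Θ × [0,1]^n → ℝ is a model differentiable in its parameters θ ∈ Θ = ℝ^m, such that (uniform trainability) ∇_θ f(θ,x) ≠ 0 for all x and θ, and (max-distal orthogonality with threshold δ > 0) for all x, v ∈ [0,1]^n, max_i |x_i − v_i| > δ implies ∇_θ f(θ,x) · ∇_θ f(θ,v) = 0. Then m ≥ z^n for any integer z with 1/z > δ, i.e., the parameter dimension is at least ⌈(1/δ)⌉-exponential in n. -/

import Mathlib

/-!
At a fixed parameter, the gradients at the points of the grid `{0, 1/z, …, (z-1)/z}ⁿ` are nonzero,
and any two distinct grid points differ by at least `1/z > δ` in some coordinate, so these `zⁿ`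
gradients are pairwise orthogonal, hence linearly independent in `ℝᵐ`.
-/

open Module

theorem card_le_finrank_of_pairwise_inner_eq_zero {𝕜 E ι : Type*} [RCLike 𝕜]
    [NormedAddCommGroup E] [InnerProductSpace 𝕜 E] [FiniteDimensional 𝕜 E] [Fintype ι]
    {v : ι → E} (hv : ∀ i, v i ≠ 0) (horth : Pairwise fun i j => inner 𝕜 (v i) (v j) = 0) :
    Fintype.card ι ≤ finrank 𝕜 E :=
  (linearIndependent_of_ne_zero_of_inner_eq_zero hv horth).fintype_card_le_finrank

section Grid

variable {ι : Type*} {z : ℕ}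

noncomputable def gridPoint (z : ℕ) (k : ι → Fin z) : ι → ℝ := fun i => (k i : ℝ) / z

theorem gridPoint_mem_Icc (k : ι → Fin z) (i : ι) : gridPoint z k i ∈ Set.Icc (0 : ℝ) 1 := by
  have hz : (0 : ℝ) < z := by exact_mod_cast (k i).pos
  refine ⟨by unfold gridPoint; positivity, ?_⟩
  rw [gridPoint, div_le_one hz]
  exact_mod_cast (k i).is_lt.le

theorem one_div_le_abs_sub_gridPoint {k k' : ι → Fin z} {i : ι} (h : k i ≠ k' i) :
    1 / (z : ℝ) ≤ |gridPoint z k i - gridPoint z k' i| := by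
  have hz : (0 : ℝ) < z := by exact_mod_cast (k i).pos
  have hone : (1 : ℝ) ≤ |(k i : ℝ) - k' i| := by
    have : (1 : ℤ) ≤ |(k i : ℤ) - k' i| :=
      Int.one_le_abs (sub_ne_zero.mpr (by exact_mod_cast Fin.val_ne_of_ne h))
    exact_mod_cast this
  rw [gridPoint, gridPoint, ← sub_div, abs_div, abs_of_pos hz]
  gcongr

end Grid

theorem uniformly_trainable_max_distal_orthogonal_exponential_general
    {n m : ℕ}
    (grad : EuclideanSpace ℝ (Fin m) → (Fin n → ℝ) → EuclideanSpace ℝ (Fin m))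
    (δ : ℝ)
    (htrain : ∀ θ x, (∀ i, x i ∈ Set.Icc (0 : ℝ) 1) → grad θ x ≠ 0)
    (horth : ∀ θ x v, (∀ i, x i ∈ Set.Icc (0 : ℝ) 1) →
      (∀ i, v i ∈ Set.Icc (0 : ℝ) 1) →
      (∃ i, δ < |x i - v i|) →
      (inner ℝ (grad θ x) (grad θ v) : ℝ) = 0)
    (z : ℕ) (hzδ : δ < (1 : ℝ) / z) :
    z ^ n ≤ m := by
  have hsep : ∀ k k' : Fin n → Fin z, k ≠ k' →
      ∃ i, δ < |gridPoint z k i - gridPoint z k' i| := fun k k' hne =>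
    let ⟨i, hi⟩ := Function.ne_iff.mp hne
    ⟨i, hzδ.trans_le (one_div_le_abs_sub_gridPoint hi)⟩
  simpa using card_le_finrank_of_pairwise_inner_eq_zero (𝕜 := ℝ)
    (v := fun k : Fin n → Fin z => grad 0 (gridPoint z k))
    (fun k => htrain 0 _ (gridPoint_mem_Icc k))
    (fun k k' hne => horth 0 _ _ (gridPoint_mem_Icc k) (gridPoint_mem_Icc k') (hsep k k' hne))

theorem uniformly_trainable_max_distal_orthogonal_exponential
    {n m : ℕ}
    (f : EuclideanSpace ℝ (Fin m) → (Fin n → ℝ) → ℝ)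
    (grad : EuclideanSpace ℝ (Fin m) → (Fin n → ℝ) → EuclideanSpace ℝ (Fin m))
    (hgrad : ∀ θ x, HasGradientAt (fun θ' => f θ' x) (grad θ x) θ)
    (δ : ℝ) (hδ : 0 < δ)
    (htrain : ∀ θ x, (∀ i, x i ∈ Set.Icc (0 : ℝ) 1) → grad θ x ≠ 0)
    (horth : ∀ θ x v, (∀ i, x i ∈ Set.Icc (0 : ℝ) 1) →
      (∀ i, v i ∈ Set.Icc (0 : ℝ) 1) →
      (∃ i, δ < |x i - v i|) →
      (inner ℝ (grad θ x) (grad θ v) : ℝ) = 0)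
    (z : ℕ) (hz : 1 ≤ z) (hzδ : δ < (1 : ℝ) / z) :
    z ^ n ≤ m :=
  uniformly_trainable_max_distal_orthogonal_exponential_general grad δ htrain horth z hzδ
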